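/- In every trace of Lib with k = l + 2 threads that is not linearizable w.r.t. S_N, the (unique) completed M_Tick method event and the (unique) completed M_i method events for i ∈ {1, …, l} pairwise overlap (none of them happens before another in the happens-before relation), and moreover each of these l + 1 events overlaps every completed method event of the trace. -/

import Mathlib

/-!
Since the trace is not linearizable, `M_Tick` is called at most once: otherwise the completion
that returns every pending call, linearized in call order, contains two `M_Tick` events and lies
in `S_N`. With a single `M_Tick`, the shared value only moves forward along
`Begin → Run → End`. During every completed method event the shared value is at some moment not
`Begin` and at some moment not `End`. An `M_i` event reads `Begin` and later `End`, while
`M_Tick` is called before the value first leaves `Begin` and returns after it has reached `End`;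
by monotonicity each of them overlaps every event with the two properties above.
-/

namespace Paper

/-- The shared-variable domain `D = {Begin, Run, End}`. -/
inductive DVal where
  | Begin
  | Run
  | End
  deriving DecidableEq

/-- Method names of the library `Lib`: `Sum.inl (Sum.inl γ)` is `M_γ` (γ ∈ Γ),
`Sum.inl (Sum.inr i)` is `M_i` (1 ≤ i ≤ l), and `Sum.inr ()` is `M_Tick`. -/
abbrev MName (Γ : Type) (l : ℕ) := (Γ ⊕ Fin l) ⊕ Unit

/-- The method `M_Tick`. -/
def tickName {Γ : Type} {l : ℕ} : MName Γ l := Sum.inr ()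

/-- The method `M_γ`. -/
def gammaName {Γ : Type} {l : ℕ} (γ : Γ) : MName Γ l := Sum.inl (Sum.inl γ)

/-- The method `M_i`. -/
def insName {Γ : Type} {l : ℕ} (i : Fin l) : MName Γ l := Sum.inl (Sum.inr i)

/-- The final state (program counter) of each method. -/
def finalPC {Γ : Type} {l : ℕ} : MName Γ l → ℕ
  | Sum.inl (Sum.inl _) => 1
  | Sum.inl (Sum.inr _) => 2
  | Sum.inr _ => 2

/-- Internal (read/write) transitions of the methods: `M_γ` reads `Run`;
`M_i` reads `Begin` then reads `End`; `M_Tick` writes `Run` then writes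
`End`.  `mTrans m pc d d' pc'` means that method `m` can step from program
counter `pc` with shared value `d` to program counter `pc'` with shared value
`d'`. -/
def mTrans {Γ : Type} {l : ℕ} (m : MName Γ l) (pc : ℕ) (d d' : DVal)
    (pc' : ℕ) : Prop :=
  match m with
  | Sum.inl (Sum.inl _) =>
      pc = 0 ∧ pc' = 1 ∧ d = DVal.Run ∧ d' = d
  | Sum.inl (Sum.inr _) =>
      (pc = 0 ∧ pc' = 1 ∧ d = DVal.Begin ∧ d' = d) ∨
      (pc = 1 ∧ pc' = 2 ∧ d = DVal.End ∧ d' = d)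
  | Sum.inr _ =>
      (pc = 0 ∧ pc' = 1 ∧ d' = DVal.Run) ∨
      (pc = 1 ∧ pc' = 2 ∧ d' = DVal.End)

/-- Observable labels: calls (with thread and method) and returns (with
thread). -/
inductive Label (Γ : Type) (l k : ℕ) where
  | call (t : Fin k) (m : MName Γ l)
  | ret (t : Fin k)

/-- A configuration of `Lib^k`: the shared value together with, for each
thread, `none` (idle) or the method it is running and its program counter. -/
abbrev LCfg (Γ : Type) (l k : ℕ) := DVal × (Fin k → Option (MName Γ l × ℕ))

/-- `Steps c tr c'` holds iff there is an execution from `c` to `c'` whose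
trace (sequence of call/return labels) is `tr`; read/write steps are
unlabelled. -/
inductive Steps {Γ : Type} {l k : ℕ} :
    LCfg Γ l k → List (Label Γ l k) → LCfg Γ l k → Prop where
  | nil (c : LCfg Γ l k) : Steps c [] c
  | call {d : DVal} {μ : Fin k → Option (MName Γ l × ℕ)} (t : Fin k)
      (m : MName Γ l) {tr : List (Label Γ l k)} {c' : LCfg Γ l k}
      (h : μ t = none)
      (hs : Steps (d, Function.update μ t (some (m, 0))) tr c') :
      Steps (d, μ) (Label.call t m :: tr) c'
  | ret {d : DVal} {μ : Fin k → Option (MName Γ l × ℕ)} (t : Fin k)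
      (m : MName Γ l) {tr : List (Label Γ l k)} {c' : LCfg Γ l k}
      (h : μ t = some (m, finalPC m))
      (hs : Steps (d, Function.update μ t none) tr c') :
      Steps (d, μ) (Label.ret t :: tr) c'
  | internal {d : DVal} {μ : Fin k → Option (MName Γ l × ℕ)} (d' : DVal)
      (t : Fin k) (m : MName Γ l) (pc pc' : ℕ) {tr : List (Label Γ l k)}
      {c' : LCfg Γ l k}
      (h : μ t = some (m, pc)) (ht : mTrans m pc d d' pc')
      (hs : Steps (d', Function.update μ t (some (m, pc'))) tr c') :
      Steps (d, μ) tr c'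

/-- `tr` is a trace of `Lib` with `k` threads: the trace of some execution
from the initial configuration (shared value `Begin`, all threads idle). -/
def IsTrace {Γ : Type} {l k : ℕ} (tr : List (Label Γ l k)) : Prop :=
  ∃ c' : LCfg Γ l k, Steps (DVal.Begin, fun _ => none) tr c'

/-- The thread performing a label. -/
def threadOf {Γ : Type} {l k : ℕ} : Label Γ l k → Fin k
  | Label.call t _ => t
  | Label.ret t => t

/-- Position `a` of `h` carries an open call: a call event with no matching
later return (no later event of the same thread). -/
def IsOpenCall {Γ : Type} {l k : ℕ} (h : List (Label Γ l k)) (a : ℕ) : Prop :=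
  ∃ (t : Fin k) (m : MName Γ l), h[a]? = some (Label.call t m) ∧
    ∀ (b : ℕ) (lb : Label Γ l k), a < b → h[b]? = some lb → threadOf lb ≠ t

/-- A complete trace: no open calls. -/
def CompleteTrace {Γ : Type} {l k : ℕ} (h : List (Label Γ l k)) : Prop :=
  ∀ a : ℕ, ¬ IsOpenCall h a

/-- A method event: positions of a matching call/return pair, together with
its thread and the name of the called method. -/
structure MEvent (Γ : Type) (l k : ℕ) where
  callPos : ℕ
  retPos : ℕ
  thread : Fin k
  name : MName Γ l

/-- `e` is a method event of the trace `h`: its call and return positions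
match (same thread, no event of that thread in between). -/
def IsMEvent {Γ : Type} {l k : ℕ} (h : List (Label Γ l k))
    (e : MEvent Γ l k) : Prop :=
  e.callPos < e.retPos ∧
  h[e.callPos]? = some (Label.call e.thread e.name) ∧
  h[e.retPos]? = some (Label.ret e.thread) ∧
  ∀ (c : ℕ) (lb : Label Γ l k), e.callPos < c → c < e.retPos →
    h[c]? = some lb → threadOf lb ≠ e.thread

/-- The happens-before relation: `e` returns before `e'` is called. -/
def HB {Γ : Type} {l k : ℕ} (e e' : MEvent Γ l k) : Prop :=
  e.retPos < e'.callPos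

/-- A complete trace `h` is linearizable w.r.t. a specification `S`: there is
a total order (a list without repetition) of all its method events extending
happens-before whose label sequence is in `S`. -/
def LinearizableComplete {Γ : Type} {l k : ℕ} (h : List (Label Γ l k))
    (S : Set (List (MName Γ l))) : Prop :=
  ∃ es : List (MEvent Γ l k), es.Nodup ∧
    (∀ e : MEvent Γ l k, IsMEvent h e ↔ e ∈ es) ∧
    es.Pairwise (fun e e' => ¬ HB e' e) ∧
    es.map MEvent.name ∈ S

/-- Remove from `h` the letters at the positions in `S`. -/
def deletePositions {α : Type} (h : List α) (S : Finset ℕ) : List α :=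
  (List.range h.length).filterMap (fun a => if a ∈ S then none else h[a]?)

/-- `h'` is a completion of `h`: it is obtained by deleting some open calls of
`h` and appending return events at the end, and it is complete. -/
def CompletionOf {Γ : Type} {l k : ℕ} (h h' : List (Label Γ l k)) : Prop :=
  ∃ (S : Finset ℕ) (tail : List (Label Γ l k)),
    (∀ a ∈ S, IsOpenCall h a) ∧
    (∀ lb ∈ tail, ∃ t : Fin k, lb = Label.ret t) ∧
    h' = deletePositions h S ++ tail ∧
    CompleteTrace h'

/-- A trace is linearizable w.r.t. `S` if some completion of it is. -/
def Linearizable {Γ : Type} {l k : ℕ} (h : List (Label Γ l k))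
    (S : Set (List (MName Γ l))) : Prop :=
  ∃ h' : List (Label Γ l k), CompletionOf h h' ∧ LinearizableComplete h' S

/-- The specification `S_N`: words containing zero or at least two `M_Tick`,
or zero or at least two `M_i` for some `i`, or whose projection onto the
letters `M_i`, `M_γ` is (up to the renaming `γ ↦ M_γ`, `a_i ↦ M_i`) in the
language of the NFA `Nfa`. -/
def SpecN {Γ : Type} [DecidableEq Γ] {l : ℕ} {σ : Type}
    (Nfa : NFA (Γ ⊕ Fin l) σ) : Set (List (MName Γ l)) :=
  {ws | ws.count tickName ≠ 1 ∨
        (∃ i : Fin l, ws.count (insName i) ≠ 1) ∨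
        (∃ x ∈ Nfa.accepts, ws.filterMap Sum.getLeft? = x)}

/-- `u` (over `Γ ∪ A`) is an insertion of the letters `A = {a_1, …, a_l}`
(the elements of `Fin l`) into `w ∈ Γ*`: each letter of `A` is inserted
exactly once, in any order, anywhere in `w`. -/
def IsInsertion {Γ : Type} {l : ℕ} (w : List Γ) (u : List (Γ ⊕ Fin l)) : Prop :=
  ∃ (ws : Fin (l + 1) → List Γ) (p : Equiv.Perm (Fin l)),
    w = (List.ofFn ws).flatten ∧
    u = (ws 0).map Sum.inl ++
        (List.ofFn fun i : Fin l => Sum.inr (p i) :: (ws i.succ).map Sum.inl).flatten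

end Paper

/-- Core derives `BEq` for sums, which is what `SpecN` counts with, but provides no `LawfulBEq`. -/
instance {α β : Type*} [BEq α] [BEq β] [LawfulBEq α] [LawfulBEq β] : LawfulBEq (α ⊕ β) where
  eq_of_beq {a b} h := by
    cases a <;> cases b <;> first | exact congrArg _ (eq_of_beq h) | cases h
  rfl {a} := by
    cases a with
    | inl x => exact beq_self_eq_true x
    | inr x => exact beq_self_eq_true x

namespace List

variable {α β : Type*} {f : α → Option β} {xs : List α}

theorem length_filterMap_take_mono {z z' : ℕ} (h : z ≤ z') :
    ((xs.take z).filterMap f).length ≤ ((xs.take z').filterMap f).length :=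
  (((take_prefix_take_left h).filterMap f).sublist).length_le

theorem length_filterMap_take_succ {z : ℕ} {x : α} {b : β} (hx : xs[z]? = some x)
    (hb : f x = some b) :
    ((xs.take (z + 1)).filterMap f).length = ((xs.take z).filterMap f).length + 1 := by
  simp [take_add_one, hx, hb]

theorem length_filterMap_take_lt {z z' : ℕ} {x : α} {b : β} (hx : xs[z]? = some x)
    (hb : f x = some b) (h : z < z') :
    ((xs.take z).filterMap f).length < ((xs.take z').filterMap f).length := by
  have := length_filterMap_take_mono (xs := xs) (f := f) (Nat.succ_le_of_lt h)
  rw [length_filterMap_take_succ hx hb] at this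
  omega

theorem getElem?_filterMap_length_take {z : ℕ} {x : α} {b : β} (hx : xs[z]? = some x)
    (hb : f x = some b) : (xs.filterMap f)[((xs.take z).filterMap f).length]? = some b := by
  have hxs : xs = xs.take z ++ x :: xs.drop (z + 1) := by
    obtain ⟨hz, rfl⟩ := getElem?_eq_some_iff.mp hx
    rw [← drop_eq_getElem_cons hz, take_append_drop]
  rw [congrArg (filterMap f) hxs, filterMap_append, filterMap_cons, hb]
  simp

theorem exists_length_filterMap_take_eq {a : ℕ} {b : β} (h : (xs.filterMap f)[a]? = some b) :
    ∃ z x, xs[z]? = some x ∧ f x = some b ∧ ((xs.take z).filterMap f).length = a := by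
  induction xs generalizing a with
  | nil => simp at h
  | cons y ys ih =>
    rcases hy : f y with _ | c
    · rw [filterMap_cons, hy] at h
      obtain ⟨z, x, hx, hb, rfl⟩ := ih h
      exact ⟨z + 1, x, by simpa using hx, hb, by simp [hy]⟩
    · rw [filterMap_cons, hy] at h
      cases a with
      | zero => exact ⟨0, y, rfl, by simp_all, by simp⟩
      | succ a =>
        obtain ⟨z, x, hx, hb, rfl⟩ := ih (by simpa using h)
        exact ⟨z + 1, x, by simpa using hx, hb, by simp [hy]⟩

theorem filterMap_getElem?_range (xs : List α) :
    (range xs.length).filterMap (fun a => xs[a]?) = xs := by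
  induction xs with
  | nil => simp
  | cons x xs ih =>
    rw [length_cons, range_succ_eq_map, filterMap_cons, filterMap_map]
    simpa [Function.comp_def] using ih

theorem two_le_count_map [BEq β] [LawfulBEq β] {g : α → β}
    {x y : α} (hx : x ∈ xs) (hy : y ∈ xs) (hxy : x ≠ y) {b : β}
    (hgx : g x = b) (hgy : g y = b) : 2 ≤ (xs.map g).count b := by
  obtain ⟨ys, hperm, hsub⟩ := Nodup.subperm (l₁ := [x, y]) (l₂ := xs) (by simp [hxy])
    (by simp [subset_def, hx, hy])
  have := Subperm.count_le ⟨ys.map g, hperm.map g, hsub.map g⟩ b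
  simpa [hgx, hgy] using this

end List

namespace Paper

variable {Γ : Type} {l k : ℕ}

open Function

theorem mTrans_value_eq_of_ne_tick {m : MName Γ l} {pc pc' : ℕ} {d d' : DVal}
    (hm : m ≠ tickName) (h : mTrans m pc d d' pc') : d' = d := by
  rcases m with (_ | _) | ⟨⟩
  · exact h.2.2.2
  · rcases h with h | h <;> exact h.2.2.2
  · exact absurd rfl hm

/-- An internal step records its thread, method, program counters and the value it leaves in the
shared variable, so that the successor configuration is a function of the configuration and the
action. -/
inductive Act (Γ : Type) (l k : ℕ) where
  | call (t : Fin k) (m : MName Γ l)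
  | ret (t : Fin k)
  | internal (t : Fin k) (m : MName Γ l) (pc pc' : ℕ) (d' : DVal)

namespace Act

def label : Act Γ l k → Option (Label Γ l k)
  | call t m => some (.call t m)
  | ret t => some (.ret t)
  | internal .. => none

def thread : Act Γ l k → Fin k
  | call t _ => t
  | ret t => t
  | internal t .. => t

/-- The state of `a.thread` after `a`. -/
def post : Act Γ l k → Option (MName Γ l × ℕ)
  | call _ m => some (m, 0)
  | ret _ => none
  | internal _ m _ pc' _ => some (m, pc')

def newValue : Act Γ l k → DVal → DVal
  | internal _ _ _ _ d', _ => d'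
  | _, d => d

def Enabled : Act Γ l k → LCfg Γ l k → Prop
  | call t _, c => c.2 t = none
  | ret t, c => ∃ m, c.2 t = some (m, finalPC m)
  | internal t m pc pc' d', c => c.2 t = some (m, pc) ∧ mTrans m pc c.1 d' pc'

def apply (a : Act Γ l k) (c : LCfg Γ l k) : LCfg Γ l k :=
  (a.newValue c.1, update c.2 a.thread a.post)

theorem label_eq_call {a : Act Γ l k} {t : Fin k} {m : MName Γ l}
    (h : a.label = some (.call t m)) : a = call t m := by
  cases a <;> simp_all [label]

theorem label_eq_ret {a : Act Γ l k} {t : Fin k} (h : a.label = some (.ret t)) : a = ret t := by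
  cases a <;> simp_all [label]

end Act

def IsRun : LCfg Γ l k → List (Act Γ l k) → Prop
  | _, [] => True
  | c, a :: as => a.Enabled c ∧ IsRun (a.apply c) as

def cfgAt (c : LCfg Γ l k) (acts : List (Act Γ l k)) (n : ℕ) : LCfg Γ l k :=
  (acts.take n).foldl (fun c a => a.apply c) c

section Runs

variable {c : LCfg Γ l k} {acts : List (Act Γ l k)} {n : ℕ} {a : Act Γ l k}

@[simp] theorem cfgAt_zero : cfgAt c acts 0 = c := rfl

theorem cfgAt_succ (h : acts[n]? = some a) :
    cfgAt c acts (n + 1) = a.apply (cfgAt c acts n) := by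
  simp [cfgAt, List.take_add_one, h]

theorem cfgAt_succ_of_eq_none (h : acts[n]? = none) :
    cfgAt c acts (n + 1) = cfgAt c acts n := by
  simp [cfgAt, List.take_add_one, h]

theorem cfgAt_succ_snd_of_call {t : Fin k} {m : MName Γ l} (h : acts[n]? = some (.call t m)) :
    (cfgAt c acts (n + 1)).2 t = some (m, 0) := by
  simp [cfgAt_succ h, Act.apply, Act.thread, Act.post]

theorem IsRun.enabled (hrun : IsRun c acts) (h : acts[n]? = some a) :
    a.Enabled (cfgAt c acts n) := by
  induction acts generalizing c n with
  | nil => simp at h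
  | cons b bs ih =>
    cases n with
    | zero => simp only [List.getElem?_cons_zero, Option.some.injEq] at h; exact h ▸ hrun.1
    | succ n => exact ih hrun.2 (by simpa using h)

end Runs

theorem Steps.exists_isRun {c c' : LCfg Γ l k} {tr : List (Label Γ l k)} (h : Steps c tr c') :
    ∃ acts : List (Act Γ l k), IsRun c acts ∧ acts.filterMap Act.label = tr := by
  induction h with
  | nil => exact ⟨[], trivial, rfl⟩
  | call t m h _ ih =>
    obtain ⟨acts, hrun, rfl⟩ := ih
    exact ⟨.call t m :: acts, ⟨h, hrun⟩, rfl⟩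
  | ret t m h _ ih =>
    obtain ⟨acts, hrun, rfl⟩ := ih
    exact ⟨.ret t :: acts, ⟨⟨m, h⟩, hrun⟩, rfl⟩
  | internal d' t m pc pc' h ht _ ih =>
    obtain ⟨acts, hrun, rfl⟩ := ih
    exact ⟨.internal t m pc pc' d' :: acts, ⟨⟨h, ht⟩, hrun⟩, rfl⟩

namespace IsRun

variable {c : LCfg Γ l k} {acts : List (Act Γ l k)} {t : Fin k} {m : MName Γ l} {pc : ℕ}

theorem thread_step (hrun : IsRun c acts) {n : ℕ} (h : (cfgAt c acts n).2 t = some (m, pc))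
    (hn : acts[n]? ≠ some (.ret t)) :
    (cfgAt c acts (n + 1)).2 t = some (m, pc) ∨
      ∃ pc' d', acts[n]? = some (.internal t m pc pc' d') ∧
        (cfgAt c acts (n + 1)).2 t = some (m, pc') := by
  rcases ha : acts[n]? with _ | a
  · exact .inl (by rw [cfgAt_succ_of_eq_none ha]; exact h)
  have hen := hrun.enabled ha
  rw [cfgAt_succ ha]
  by_cases ht : t = a.thread
  · cases a with
    | call t' m' =>
      obtain rfl : t = t' := ht
      simp_all [Act.Enabled]
    | ret t' =>
      obtain rfl : t = t' := ht
      exact absurd ha hn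
    | internal t' m' pc₀ pc₁ d' =>
      obtain rfl : t = t' := ht
      obtain ⟨rfl, rfl⟩ : m' = m ∧ pc₀ = pc := by simp_all [Act.Enabled]
      exact .inr ⟨pc₁, d', rfl, by simp [Act.apply, Act.thread, Act.post]⟩
  · exact .inl (by simp [Act.apply, update_of_ne ht, h])

theorem exists_state_of_no_ret (hrun : IsRun c acts) {x y : ℕ} (hxy : x ≤ y)
    (hx : (cfgAt c acts x).2 t = some (m, pc))
    (hret : ∀ i, x ≤ i → i < y → acts[i]? ≠ some (.ret t)) :
    ∃ pc', (cfgAt c acts y).2 t = some (m, pc') := by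
  induction y, hxy using Nat.le_induction with
  | base => exact ⟨pc, hx⟩
  | succ y hxy ih =>
    obtain ⟨pc', h⟩ := ih fun i h₁ h₂ => hret i h₁ (by omega)
    rcases hrun.thread_step h (hret y hxy (by omega)) with h' | ⟨pc'', -, -, h'⟩
    exacts [⟨pc', h'⟩, ⟨pc'', h'⟩]

theorem exists_internal_of_ne (hrun : IsRun c acts) {x y : ℕ} (hxy : x ≤ y)
    (hx : (cfgAt c acts x).2 t = some (m, pc)) (hy : (cfgAt c acts y).2 t ≠ some (m, pc))
    (hret : ∀ i, x ≤ i → i < y → acts[i]? ≠ some (.ret t)) :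
    ∃ z, x ≤ z ∧ z < y ∧ ∃ pc' d', acts[z]? = some (.internal t m pc pc' d') := by
  induction y, hxy using Nat.le_induction with
  | base => exact absurd hx hy
  | succ y hxy ih =>
    by_cases hy' : (cfgAt c acts y).2 t = some (m, pc)
    · rcases hrun.thread_step hy' (hret y hxy (by omega)) with h' | ⟨pc', d', hz, -⟩
      exacts [absurd h' hy, ⟨y, hxy, by omega, pc', d', hz⟩]
    · obtain ⟨z, h₁, h₂, hz⟩ := ih hy' fun i h₁ h₂ => hret i h₁ (by omega)
      exact ⟨z, h₁, by omega, hz⟩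

theorem exists_call_of_running (hrun : IsRun c acts) (hc : c.2 t = none) {n : ℕ}
    (h : (cfgAt c acts n).2 t = some (m, pc)) : ∃ j < n, acts[j]? = some (.call t m) := by
  induction n generalizing pc with
  | zero => simp [hc] at h
  | succ n ih =>
    rcases ha : acts[n]? with _ | a
    · rw [cfgAt_succ_of_eq_none ha] at h
      obtain ⟨j, hj, hjc⟩ := ih h
      exact ⟨j, by omega, hjc⟩
    rw [cfgAt_succ ha] at h
    by_cases ht : t = a.thread
    · cases a with
      | call t' m' =>
        obtain rfl : t = t' := ht
        obtain rfl : m' = m := by simp_all [Act.apply, Act.thread, Act.post]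
        exact ⟨n, by omega, ha⟩
      | ret t' =>
        obtain rfl : t = t' := ht
        simp [Act.apply, Act.thread, Act.post] at h
      | internal t' m' pc₀ pc₁ d' =>
        obtain rfl : t = t' := ht
        obtain rfl : m' = m := by simp_all [Act.apply, Act.thread, Act.post]
        obtain ⟨j, hj, hjc⟩ := ih (hrun.enabled ha).1
        exact ⟨j, by omega, hjc⟩
    · obtain ⟨j, hj, hjc⟩ := ih (by simpa [Act.apply, update_of_ne ht] using h)
      exact ⟨j, by omega, hjc⟩

end IsRun

structure IsActEvent (acts : List (Act Γ l k)) (C R : ℕ) (t : Fin k) (m : MName Γ l) : Prop where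
  lt : C < R
  call : acts[C]? = some (.call t m)
  ret : acts[R]? = some (.ret t)
  no_ret : ∀ i, C < i → i < R → acts[i]? ≠ some (.ret t)

namespace IsActEvent

variable {c : LCfg Γ l k} {acts : List (Act Γ l k)} {C R : ℕ} {t : Fin k} {m : MName Γ l}

theorem state_succ_call (he : IsActEvent acts C R t m) :
    (cfgAt c acts (C + 1)).2 t = some (m, 0) :=
  cfgAt_succ_snd_of_call he.call

theorem exists_internal (hrun : IsRun c acts) (he : IsActEvent acts C R t m) {x pc : ℕ}
    (hCx : C < x) (hxR : x ≤ R) (hx : (cfgAt c acts x).2 t = some (m, pc))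
    (hpc : pc ≠ finalPC m) :
    ∃ z, x ≤ z ∧ z < R ∧ ∃ pc' d', acts[z]? = some (.internal t m pc pc' d') := by
  refine hrun.exists_internal_of_ne hxR hx ?_ fun i h₁ h₂ => he.no_ret i (by omega) h₂
  obtain ⟨m', hm'⟩ : ∃ m', (cfgAt c acts R).2 t = some (m', finalPC m') := hrun.enabled he.ret
  rw [hm']
  rintro ⟨⟩
  exact hpc rfl

theorem exists_internal_pair (hrun : IsRun c acts) (he : IsActEvent acts C R t m)
    (hfin : finalPC m = 2) (h01 : ∀ d d' pc', mTrans m 0 d d' pc' → pc' = 1) :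
    ∃ z₁ z₂, C < z₁ ∧ z₁ < z₂ ∧ z₂ < R ∧ (∃ d', acts[z₁]? = some (.internal t m 0 1 d')) ∧
      ∃ pc' d', acts[z₂]? = some (.internal t m 1 pc' d') := by
  obtain ⟨z₁, hz₁, hz₁R, pc', d', hact₁⟩ :=
    he.exists_internal hrun (Nat.lt_succ_self C) he.lt he.state_succ_call (by omega)
  obtain rfl : pc' = 1 := h01 _ _ _ (hrun.enabled hact₁).2
  have hstate : (cfgAt c acts (z₁ + 1)).2 t = some (m, 1) := by
    simp [cfgAt_succ hact₁, Act.apply, Act.thread, Act.post]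
  obtain ⟨z₂, hz₂, hz₂R, hact₂⟩ := he.exists_internal hrun (by omega) hz₁R hstate (by omega)
  exact ⟨z₁, z₂, by omega, by omega, hz₂R, ⟨d', hact₁⟩, hact₂⟩

theorem exists_run_of_gamma (hrun : IsRun c acts) {γ : Γ}
    (he : IsActEvent acts C R t (gammaName γ)) :
    ∃ z, C < z ∧ z < R ∧ (cfgAt c acts z).1 = .Run := by
  obtain ⟨z, hz, hzR, pc', d', hact⟩ :=
    he.exists_internal hrun (Nat.lt_succ_self C) he.lt he.state_succ_call
      (by simp [finalPC, gammaName])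
  exact ⟨z, by omega, hzR, (hrun.enabled hact).2.2.2.1⟩

theorem exists_begin_end_of_ins (hrun : IsRun c acts) {i : Fin l}
    (he : IsActEvent acts C R t (insName i)) :
    ∃ p q, C < p ∧ p < q ∧ q < R ∧ (cfgAt c acts p).1 = .Begin ∧ (cfgAt c acts q).1 = .End := by
  obtain ⟨p, q, hp, hpq, hqR, ⟨d, hp'⟩, pc', d', hq'⟩ :=
    he.exists_internal_pair hrun rfl fun _ _ _ h => by simp_all [insName, mTrans]
  have hbegin := (hrun.enabled hp').2
  have hend := (hrun.enabled hq').2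
  simp only [insName, mTrans] at hbegin hend
  exact ⟨p, q, hp, hpq, hqR, by simp_all, by simp_all⟩

theorem exists_end_of_tick (hrun : IsRun c acts) (he : IsActEvent acts C R t tickName) :
    ∃ z, C < z ∧ z < R ∧ (cfgAt c acts (z + 1)).1 = .End := by
  obtain ⟨z₁, z, hz₁, hz, hzR, -, pc', d', hact⟩ :=
    he.exists_internal_pair hrun rfl fun _ _ _ h => by simp_all [tickName, mTrans]
  have hend := (hrun.enabled hact).2
  simp only [tickName, mTrans] at hend
  refine ⟨z, by omega, hzR, ?_⟩
  simp_all [cfgAt_succ hact, Act.apply, Act.newValue]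

end IsActEvent

abbrev initCfg : LCfg Γ l k := (.Begin, fun _ => none)

def TickCalledAtMostOnce (acts : List (Act Γ l k)) : Prop :=
  {C : ℕ | ∃ t, acts[C]? = some (Act.call t tickName)}.Subsingleton

theorem Act.newValue_ne_begin {c : LCfg Γ l k} {a : Act Γ l k} (ha : a.Enabled c)
    (hc : c.1 ≠ .Begin) : a.newValue c.1 ≠ .Begin := by
  rcases a with _ | _ | ⟨t, m, pc, pc', d'⟩
  · exact hc
  · exact hc
  by_cases hm : m = tickName
  · subst hm
    have h := ha.2
    simp only [tickName, mTrans] at h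
    simp only [newValue]
    rcases h with ⟨-, -, rfl⟩ | ⟨-, -, rfl⟩ <;> simp
  · rwa [newValue, mTrans_value_eq_of_ne_tick hm ha.2]

namespace IsRun

variable {c : LCfg Γ l k} {acts : List (Act Γ l k)}

theorem value_ne_begin_of_le (hrun : IsRun c acts) {x y : ℕ} (hxy : x ≤ y)
    (hx : (cfgAt c acts x).1 ≠ .Begin) : (cfgAt c acts y).1 ≠ .Begin := by
  induction y, hxy using Nat.le_induction with
  | base => exact hx
  | succ y _ ih =>
    rcases ha : acts[y]? with _ | a
    · rwa [cfgAt_succ_of_eq_none ha]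
    · rw [cfgAt_succ ha]
      exact Act.newValue_ne_begin (hrun.enabled ha) ih

theorem exists_call_tick_of_ne_begin (hrun : IsRun initCfg acts) {n : ℕ}
    (h : (cfgAt initCfg acts n).1 ≠ .Begin) :
    ∃ j < n, ∃ t, acts[j]? = some (.call t tickName) := by
  induction n with
  | zero => exact absurd rfl h
  | succ n ih =>
    by_cases hn : (cfgAt initCfg acts n).1 = .Begin
    · rcases ha : acts[n]? with _ | a
      · rw [cfgAt_succ_of_eq_none ha] at h
        exact absurd hn h
      rw [cfgAt_succ ha] at h
      have hen := hrun.enabled ha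
      rcases a with _ | _ | ⟨t, m, pc, pc', d'⟩
      · exact absurd hn h
      · exact absurd hn h
      by_cases hm : m = tickName
      · subst hm
        obtain ⟨j, hj, hjc⟩ := hrun.exists_call_of_running rfl hen.1
        exact ⟨j, by omega, t, hjc⟩
      · exact absurd (hn ▸ mTrans_value_eq_of_ne_tick hm hen.2) h
    · obtain ⟨j, hj, hjc⟩ := ih hn
      exact ⟨j, by omega, hjc⟩

theorem thread_eq_of_running_tick (hrun : IsRun initCfg acts) (hU : TickCalledAtMostOnce acts)
    {n : ℕ} {t t' : Fin k} {pc pc' : ℕ} (h : (cfgAt initCfg acts n).2 t = some (tickName, pc))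
    (h' : (cfgAt initCfg acts n).2 t' = some (tickName, pc')) : t = t' := by
  obtain ⟨j, -, hj⟩ := hrun.exists_call_of_running rfl h
  obtain ⟨j', -, hj'⟩ := hrun.exists_call_of_running rfl h'
  obtain rfl : j = j' := hU ⟨t, hj⟩ ⟨t', hj'⟩
  simpa [hj] using hj'

/-- Once the shared value is `End`, no instance of `M_Tick` can still write `Run`. -/
theorem value_ne_end_of_running_tick_zero (hrun : IsRun initCfg acts)
    (hU : TickCalledAtMostOnce acts) {n : ℕ} {t : Fin k}
    (h : (cfgAt initCfg acts n).2 t = some (tickName, 0)) : (cfgAt initCfg acts n).1 ≠ .End := by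
  induction n generalizing t with
  | zero => simp at h
  | succ n ih =>
    rcases ha : acts[n]? with _ | a
    · rw [cfgAt_succ_of_eq_none ha] at h ⊢
      exact ih h
    rw [cfgAt_succ ha] at h ⊢
    have hen := hrun.enabled ha
    intro hend
    by_cases ht : t = a.thread
    · rcases a with ⟨t', m⟩ | t' | ⟨t', m, pc, pc', d'⟩ <;> obtain rfl : t = t' := ht
      · obtain rfl : m = tickName := by simp_all [Act.apply, Act.thread, Act.post]
        have hne : (cfgAt initCfg acts n).1 ≠ .Begin := by simp_all [Act.apply, Act.newValue]
        obtain ⟨j, hj, t'', hj'⟩ := hrun.exists_call_tick_of_ne_begin hne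
        exact absurd (hU ⟨t'', hj'⟩ ⟨t, ha⟩) (by omega)
      · simp [Act.apply, Act.thread, Act.post] at h
      · obtain ⟨rfl, rfl⟩ : m = tickName ∧ pc' = 0 := by
          simp_all [Act.apply, Act.thread, Act.post]
        have h' := hen.2
        simp [tickName, mTrans] at h'
    · simp only [Act.apply, update_of_ne ht] at h
      rcases a with _ | _ | ⟨t', m, pc, pc', d'⟩
      · exact ih h hend
      · exact ih h hend
      by_cases hm : m = tickName
      · subst hm
        exact ht (hrun.thread_eq_of_running_tick hU h hen.1)
      · rw [Act.apply, Act.newValue, mTrans_value_eq_of_ne_tick hm hen.2] at hend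
        exact ih h hend

theorem value_end_of_le (hrun : IsRun initCfg acts) (hU : TickCalledAtMostOnce acts)
    {x y : ℕ} (hxy : x ≤ y) (hx : (cfgAt initCfg acts x).1 = .End) :
    (cfgAt initCfg acts y).1 = .End := by
  induction y, hxy using Nat.le_induction with
  | base => exact hx
  | succ y _ ih =>
    rcases ha : acts[y]? with _ | a
    · rwa [cfgAt_succ_of_eq_none ha]
    rw [cfgAt_succ ha]
    have hen := hrun.enabled ha
    rcases a with _ | _ | ⟨t, m, pc, pc', d'⟩
    · exact ih
    · exact ih
    by_cases hm : m = tickName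
    · subst hm
      have h := hen.2
      simp only [tickName, mTrans] at h
      rcases h with ⟨rfl, -, -⟩ | ⟨-, -, rfl⟩
      · exact absurd ih (hrun.value_ne_end_of_running_tick_zero hU hen.1)
      · rfl
    · rwa [Act.apply, Act.newValue, mTrans_value_eq_of_ne_tick hm hen.2]

end IsRun

/-- `cfgAt c acts z` is the configuration just before action `z`, so `C < z ≤ R` ranges over the
configurations between the call at `C` and the return at `R`. -/
def SeesValue (c : LCfg Γ l k) (acts : List (Act Γ l k)) (C R : ℕ) (p : DVal → Prop) : Prop :=
  ∃ z, C < z ∧ z ≤ R ∧ p (cfgAt c acts z).1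

namespace IsActEvent

variable {acts : List (Act Γ l k)} {C R C' R' : ℕ} {t : Fin k} {m : MName Γ l}

theorem seesValue_ne_begin_and_ne_end (hrun : IsRun initCfg acts)
    (hU : TickCalledAtMostOnce acts) (he : IsActEvent acts C R t m) :
    SeesValue initCfg acts C R (· ≠ .Begin) ∧ SeesValue initCfg acts C R (· ≠ .End) := by
  rcases m with (γ | i) | ⟨⟩
  · obtain ⟨z, hz, hzR, hrunning⟩ := he.exists_run_of_gamma (γ := γ) hrun
    exact ⟨⟨z, hz, hzR.le, by simp [hrunning]⟩, ⟨z, hz, hzR.le, by simp [hrunning]⟩⟩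
  · obtain ⟨p, q, hp, hpq, hqR, hbegin, hend⟩ := he.exists_begin_end_of_ins (i := i) hrun
    exact ⟨⟨q, by omega, hqR.le, by simp [hend]⟩, ⟨p, hp, by omega, by simp [hbegin]⟩⟩
  · obtain ⟨z, hz, hzR, hend⟩ := he.exists_end_of_tick hrun
    exact ⟨⟨z + 1, by omega, hzR, by simp [hend]⟩,
      ⟨C + 1, by omega, he.lt, hrun.value_ne_end_of_running_tick_zero hU he.state_succ_call⟩⟩

theorem overlaps_of_ins (hrun : IsRun initCfg acts) (hU : TickCalledAtMostOnce acts) {i : Fin l}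
    (he : IsActEvent acts C R t (insName i))
    (hne_begin : SeesValue initCfg acts C' R' (· ≠ .Begin))
    (hne_end : SeesValue initCfg acts C' R' (· ≠ .End)) : C' < R ∧ C < R' := by
  obtain ⟨p, q, hp, hpq, hqR, hbegin, hend⟩ := he.exists_begin_end_of_ins hrun
  obtain ⟨x, -, hxR, hx_ne⟩ := hne_begin
  obtain ⟨y, hy, -, hy_ne⟩ := hne_end
  have hpx : p < x := by
    by_contra! hxp
    exact hrun.value_ne_begin_of_le hxp hx_ne hbegin
  have hyq : y < q := by
    by_contra! hqy
    exact hy_ne (hrun.value_end_of_le hU hqy hend)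
  omega

theorem overlaps_of_tick (hrun : IsRun initCfg acts) (hU : TickCalledAtMostOnce acts)
    (he : IsActEvent acts C R t tickName)
    (hne_begin : SeesValue initCfg acts C' R' (· ≠ .Begin))
    (hne_end : SeesValue initCfg acts C' R' (· ≠ .End)) : C' < R ∧ C < R' := by
  obtain ⟨z, -, hzR, hend⟩ := he.exists_end_of_tick hrun
  obtain ⟨x, -, hxR, hx_ne⟩ := hne_begin
  obtain ⟨y, hy, -, hy_ne⟩ := hne_end
  have hyR : y < R := by
    by_contra! hRy
    exact hy_ne (hrun.value_end_of_le hU (by omega) hend)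
  obtain ⟨j, hjx, t', hj⟩ := hrun.exists_call_tick_of_ne_begin hx_ne
  obtain rfl : j = C := hU ⟨t', hj⟩ ⟨t, he.call⟩
  omega

theorem overlaps (hrun : IsRun initCfg acts) (hU : TickCalledAtMostOnce acts)
    (he : IsActEvent acts C R t m) (hm : m = tickName ∨ ∃ i, m = insName i) {t' : Fin k}
    {m' : MName Γ l} (he' : IsActEvent acts C' R' t' m') : C' < R ∧ C < R' := by
  obtain ⟨hne_begin, hne_end⟩ := he'.seesValue_ne_begin_and_ne_end hrun hU
  rcases hm with rfl | ⟨i, rfl⟩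
  exacts [he.overlaps_of_tick hrun hU hne_begin hne_end,
    he.overlaps_of_ins hrun hU hne_begin hne_end]

end IsActEvent

/-- The position in the trace of the first labelled action at or after action `z`. -/
def tracePos (acts : List (Act Γ l k)) (z : ℕ) : ℕ := ((acts.take z).filterMap Act.label).length

section TracePos

variable {acts : List (Act Γ l k)} {tr : List (Label Γ l k)}

theorem lt_of_tracePos_lt {x y : ℕ} (h : tracePos acts x < tracePos acts y) : x < y := by
  by_contra! hyx
  exact absurd (List.length_filterMap_take_mono (f := Act.label) (xs := acts) hyx) h.not_ge

theorem exists_act_of_label (hacts : acts.filterMap Act.label = tr) {a : ℕ} {lb : Label Γ l k}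
    (h : tr[a]? = some lb) : ∃ z x, acts[z]? = some x ∧ x.label = some lb ∧ tracePos acts z = a :=
  List.exists_length_filterMap_take_eq (hacts ▸ h)

theorem exists_call_of_label (hacts : acts.filterMap Act.label = tr) {a : ℕ} {t : Fin k}
    {m : MName Γ l} (h : tr[a]? = some (.call t m)) :
    ∃ z, acts[z]? = some (.call t m) ∧ tracePos acts z = a := by
  obtain ⟨z, x, hz, hx, rfl⟩ := exists_act_of_label hacts h
  exact ⟨z, Act.label_eq_call hx ▸ hz, rfl⟩

theorem exists_ret_of_label (hacts : acts.filterMap Act.label = tr) {a : ℕ} {t : Fin k}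
    (h : tr[a]? = some (.ret t)) : ∃ z, acts[z]? = some (.ret t) ∧ tracePos acts z = a := by
  obtain ⟨z, x, hz, hx, rfl⟩ := exists_act_of_label hacts h
  exact ⟨z, Act.label_eq_ret hx ▸ hz, rfl⟩

theorem getElem?_tracePos (hacts : acts.filterMap Act.label = tr) {z : ℕ} {x : Act Γ l k}
    {lb : Label Γ l k} (hz : acts[z]? = some x) (hx : x.label = some lb) :
    tr[tracePos acts z]? = some lb :=
  hacts ▸ List.getElem?_filterMap_length_take hz hx

theorem tracePos_lt {z z' : ℕ} {x : Act Γ l k} {lb : Label Γ l k} (hz : acts[z]? = some x)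
    (hx : x.label = some lb) (h : z < z') : tracePos acts z < tracePos acts z' :=
  List.length_filterMap_take_lt hz hx h

theorem IsMEvent.exists_isActEvent (hacts : acts.filterMap Act.label = tr) {e : MEvent Γ l k}
    (he : IsMEvent tr e) : ∃ C R, IsActEvent acts C R e.thread e.name ∧
      tracePos acts C = e.callPos ∧ tracePos acts R = e.retPos := by
  obtain ⟨hlt, hcall, hret, hbetween⟩ := he
  obtain ⟨C, hC, hCpos⟩ := exists_call_of_label hacts hcall
  obtain ⟨R, hR, hRpos⟩ := exists_ret_of_label hacts hret
  refine ⟨C, R, ⟨lt_of_tracePos_lt (hCpos ▸ hRpos ▸ hlt), hC, hR, fun i hCi hiR hi => ?_⟩,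
    hCpos, hRpos⟩
  exact hbetween _ _ (hCpos ▸ tracePos_lt hC rfl hCi) (hRpos ▸ tracePos_lt hi rfl hiR)
    (getElem?_tracePos hacts hi rfl) rfl

theorem tickCalledAtMostOnce_of_label (hacts : acts.filterMap Act.label = tr)
    (h : {a : ℕ | ∃ t, tr[a]? = some (Label.call t tickName)}.Subsingleton) :
    TickCalledAtMostOnce acts := by
  rintro C ⟨t, hC⟩ C' ⟨t', hC'⟩
  have hpos := h ⟨t, getElem?_tracePos hacts hC rfl⟩ ⟨t', getElem?_tracePos hacts hC' rfl⟩
  rcases lt_trichotomy C C' with hlt | heq | hlt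
  · exact absurd hpos (tracePos_lt hC rfl hlt).ne
  · exact heq
  · exact absurd hpos (tracePos_lt hC' rfl hlt).ne'

end TracePos

section Histories

variable {h : List (Label Γ l k)}

theorem IsMEvent.eq_of_callPos_eq {e e' : MEvent Γ l k} (he : IsMEvent h e) (he' : IsMEvent h e')
    (hc : e.callPos = e'.callPos) : e = e' := by
  obtain ⟨hlt, hcall, hret, hbetween⟩ := he
  obtain ⟨hlt', hcall', hret', hbetween'⟩ := he'
  obtain ⟨hthread, hname⟩ : e'.thread = e.thread ∧ e'.name = e.name := by
    simpa [hc, hcall'] using hcall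
  have hr : e.retPos = e'.retPos := by
    rcases lt_trichotomy e.retPos e'.retPos with hr | hr | hr
    · exact absurd hthread.symm (hbetween' _ _ (by omega) hr hret)
    · exact hr
    · exact absurd hthread (hbetween _ _ (by omega) hr hret')
  cases e
  cases e'
  simp_all

open Classical in
noncomputable def eventAt (h : List (Label Γ l k)) (a : ℕ) : Option (MEvent Γ l k) :=
  if he : ∃ e, IsMEvent h e ∧ e.callPos = a then some he.choose else none

theorem eventAt_eq_some_iff {a : ℕ} {e : MEvent Γ l k} :
    eventAt h a = some e ↔ IsMEvent h e ∧ e.callPos = a := by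
  unfold eventAt
  split_ifs with hex
  · refine ⟨fun h' => Option.some.inj h' ▸ hex.choose_spec, fun ⟨he, hc⟩ => ?_⟩
    exact congrArg some (hex.choose_spec.1.eq_of_callPos_eq he (hex.choose_spec.2.trans hc.symm))
  · exact ⟨nofun, fun he => absurd ⟨e, he⟩ hex⟩

noncomputable def eventsOf (h : List (Label Γ l k)) : List (MEvent Γ l k) :=
  (List.range h.length).filterMap (eventAt h)

theorem mem_eventsOf {e : MEvent Γ l k} : e ∈ eventsOf h ↔ IsMEvent h e := by
  simp only [eventsOf, List.mem_filterMap, List.mem_range, eventAt_eq_some_iff]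
  refine ⟨fun ⟨_, _, he, _⟩ => he, fun he => ⟨e.callPos, ?_, he, rfl⟩⟩
  exact (List.getElem?_eq_some_iff.mp he.2.1).1

theorem nodup_eventsOf : (eventsOf h).Nodup :=
  List.nodup_range.filterMap fun _ _ _ ha ha' =>
    (eventAt_eq_some_iff.mp ha).2.symm.trans (eventAt_eq_some_iff.mp ha').2

theorem pairwise_eventsOf : (eventsOf h).Pairwise fun e e' => ¬ HB e' e := by
  refine List.pairwise_filterMap.mpr (List.pairwise_lt_range.imp fun hlt e he e' he' hb => ?_)
  obtain ⟨-, rfl⟩ := eventAt_eq_some_iff.mp he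
  obtain ⟨hev', rfl⟩ := eventAt_eq_some_iff.mp he'
  exact absurd hb (by unfold HB; have := hev'.1; omega)

theorem linearizableComplete_of_eventsOf {S : Set (List (MName Γ l))}
    (hS : (eventsOf h).map MEvent.name ∈ S) : LinearizableComplete h S :=
  ⟨eventsOf h, nodup_eventsOf, fun _ => mem_eventsOf.symm, pairwise_eventsOf, hS⟩

def CallsSeparatedByReturns (h : List (Label Γ l k)) : Prop :=
  ∀ (a b : ℕ) (t : Fin k) (m m' : MName Γ l), h[a]? = some (Label.call t m) →
    h[b]? = some (Label.call t m') → a < b →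
    ∃ c, a < c ∧ c < b ∧ h[c]? = some (Label.ret t)

def allReturns (Γ : Type) (l k : ℕ) : List (Label Γ l k) := (List.finRange k).map Label.ret

theorem getElem?_append_allReturns (t : Fin k) :
    (h ++ allReturns Γ l k)[h.length + t]? = some (Label.ret t) := by
  simp [allReturns]

theorem lt_length_of_append_allReturns_call {a : ℕ} {t : Fin k} {m : MName Γ l}
    (ha : (h ++ allReturns Γ l k)[a]? = some (Label.call t m)) : a < h.length := by
  by_contra! hle
  simp [List.getElem?_append_right hle, allReturns] at ha

theorem completionOf_append_allReturns (h : List (Label Γ l k)) :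
    CompletionOf h (h ++ allReturns Γ l k) := by
  refine ⟨∅, allReturns Γ l k, by simp, by simp [allReturns], ?_, ?_⟩
  · simp [deletePositions, List.filterMap_getElem?_range]
  · rintro a ⟨t, m, ha, hlater⟩
    exact hlater _ _ (by have := lt_length_of_append_allReturns_call ha; omega)
      (getElem?_append_allReturns t) rfl

theorem CallsSeparatedByReturns.exists_isMEvent (hsep : CallsSeparatedByReturns h) {a : ℕ}
    {t : Fin k} {m : MName Γ l} (ha : h[a]? = some (Label.call t m)) :
    ∃ e, IsMEvent (h ++ allReturns Γ l k) e ∧ e.callPos = a ∧ e.name = m := by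
  classical
  have halt : a < h.length := (List.getElem?_eq_some_iff.mp ha).1
  have hnext : ∃ b, a < b ∧ ∃ lb, (h ++ allReturns Γ l k)[b]? = some lb ∧ threadOf lb = t :=
    ⟨h.length + t, by omega, _, getElem?_append_allReturns t, rfl⟩
  obtain ⟨hab, lb, hb, hlb⟩ := Nat.find_spec hnext
  have hfirst : ∀ c lb', a < c → c < Nat.find hnext →
      (h ++ allReturns Γ l k)[c]? = some lb' → threadOf lb' ≠ t :=
    fun c lb' hac hcb hc hlb' => Nat.find_min hnext hcb ⟨hac, lb', hc, hlb'⟩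
  rcases lb with ⟨t', m'⟩ | t'
  · obtain rfl : t' = t := hlb
    have hblt := lt_length_of_append_allReturns_call hb
    rw [List.getElem?_append_left hblt] at hb
    obtain ⟨c, hac, hcb, hc⟩ := hsep a _ t' m m' ha hb hab
    exact absurd rfl (hfirst c _ hac hcb (by rwa [List.getElem?_append_left (by omega)]))
  · obtain rfl : t' = t := hlb
    exact ⟨⟨a, Nat.find hnext, t', m⟩, ⟨hab, by rwa [List.getElem?_append_left halt], hb,
      hfirst⟩, rfl, rfl⟩

theorem CallsSeparatedByReturns.linearizable_of_two_calls [DecidableEq Γ]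
    (hsep : CallsSeparatedByReturns h) {S : Set (List (MName Γ l))} {m₀ : MName Γ l}
    (hS : ∀ ws, 2 ≤ ws.count m₀ → ws ∈ S) {a a' : ℕ} {t t' : Fin k}
    (ha : h[a]? = some (Label.call t m₀)) (ha' : h[a']? = some (Label.call t' m₀))
    (hne : a ≠ a') : Linearizable h S := by
  obtain ⟨e, he, hc, hn⟩ := hsep.exists_isMEvent ha
  obtain ⟨e', he', hc', hn'⟩ := hsep.exists_isMEvent ha'
  refine ⟨_, completionOf_append_allReturns h, linearizableComplete_of_eventsOf (hS _ ?_)⟩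
  exact List.two_le_count_map (mem_eventsOf.mpr he) (mem_eventsOf.mpr he')
    (fun hee => hne (hc ▸ hc' ▸ congrArg MEvent.callPos hee)) hn hn'

end Histories

theorem IsRun.callsSeparatedByReturns {c : LCfg Γ l k} {acts : List (Act Γ l k)}
    {tr : List (Label Γ l k)} (hrun : IsRun c acts) (hacts : acts.filterMap Act.label = tr) :
    CallsSeparatedByReturns tr := by
  intro a b t m m' ha hb hab
  obtain ⟨C, hC, rfl⟩ := exists_call_of_label hacts ha
  obtain ⟨B, hB, rfl⟩ := exists_call_of_label hacts hb
  by_contra! hno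
  obtain ⟨pc, hbusy⟩ := hrun.exists_state_of_no_ret (lt_of_tracePos_lt hab)
    (cfgAt_succ_snd_of_call hC) fun i hCi hiB hi =>
      hno _ (tracePos_lt hC rfl hCi) (tracePos_lt hi rfl hiB) (getElem?_tracePos hacts hi rfl)
  have hidle : (cfgAt c acts B).2 t = none := hrun.enabled hB
  simp [hidle] at hbusy

theorem tick_and_insertion_events_overlap_all_general
    (Γ : Type) (instD : DecidableEq Γ) (l : ℕ)
    (σ : Type) (Nfa : NFA (Γ ⊕ Fin l) σ)
    (tr : List (Label Γ l (l + 2)))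
    (htr : IsTrace tr) (hnl : ¬ Linearizable tr (SpecN Nfa)) :
    ∀ e e' : MEvent Γ l (l + 2), IsMEvent tr e → IsMEvent tr e' →
      (e.name = tickName ∨ ∃ i : Fin l, e.name = insName i) →
      e ≠ e' →
      ¬ HB e e' ∧ ¬ HB e' e := by
  intro e e' he he' hname _
  obtain ⟨_, hsteps⟩ := htr
  obtain ⟨acts, hrun, hacts⟩ := Steps.exists_isRun hsteps
  have hU : TickCalledAtMostOnce acts := by
    refine tickCalledAtMostOnce_of_label hacts fun a ⟨t, ha⟩ a' ⟨t', ha'⟩ => ?_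
    by_contra hne
    exact hnl ((hrun.callsSeparatedByReturns hacts).linearizable_of_two_calls
      (fun ws hws => Or.inl (by omega)) ha ha' hne)
  obtain ⟨C, R, hE, hC, hR⟩ := he.exists_isActEvent hacts
  obtain ⟨C', R', hE', hC', hR'⟩ := he'.exists_isActEvent hacts
  obtain ⟨hC'R, hCR'⟩ := hE.overlaps hrun hU hname hE'
  refine ⟨fun hb => ?_, fun hb => ?_⟩
  · have : R < C' := lt_of_tracePos_lt (by rw [hR, hC']; exact hb)
    omega
  · have : R' < C := lt_of_tracePos_lt (by rw [hR', hC]; exact hb)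
    omega

/-- In every trace of `Lib` with `k = l + 2` threads that is
not linearizable w.r.t. `S_N`, the completed `M_Tick` method event and the
completed `M_i` method events pairwise overlap, and each of them overlaps
every completed method event of the trace (neither happens before the other). -/
theorem tick_and_insertion_events_overlap_all
    (Γ : Type) (instF : Fintype Γ) (instD : DecidableEq Γ) (l : ℕ)
    (σ : Type) (instσ : Fintype σ) (Nfa : NFA (Γ ⊕ Fin l) σ)
    (tr : List (Label Γ l (l + 2)))
    (htr : IsTrace tr) (hnl : ¬ Linearizable tr (SpecN Nfa)) :
    ∀ e e' : MEvent Γ l (l + 2), IsMEvent tr e → IsMEvent tr e' →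
      (e.name = tickName ∨ ∃ i : Fin l, e.name = insName i) →
      e ≠ e' →
      ¬ HB e e' ∧ ¬ HB e' e :=
  tick_and_insertion_events_overlap_all_general Γ instD l σ Nfa tr htr hnl

end Paper
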